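/- For every σ > 0 and every h ∈ ℝ, | σ² E[sech²(h + σZ)] − (3/2) σ² E[sech⁴(h + σZ)] | ≤ Λ₀/σ, where Λ₀ = (π² − 3)/(6√(2π)). -/

import Mathlib

open MeasureTheory Filter

/-- Standard Gaussian density. -/
noncomputable def stdGauss (z : ℝ) : ℝ := Real.exp (-z ^ 2 / 2) / Real.sqrt (2 * Real.pi)

/-- Gaussian expectation `E[f(h + σ Z)]` for a standard Gaussian `Z`. -/
noncomputable def gexp (f : ℝ → ℝ) (σ h : ℝ) : ℝ := ∫ z, f (h + σ * z) * stdGauss z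

/-- Hyperbolic secant. -/
noncomputable def sech (x : ℝ) : ℝ := 1 / Real.cosh x

/-!
With `s = sech²` one has `s'' = 4 s - 6 s²`, so the quantity equals `(σ²/4) E[s''(h + σZ)]`.
Two Gaussian integrations by parts (`φ'' = (z² - 1) φ`) turn this into
`(1/4) E[s(h + σZ) (Z² - 1)]`. Since `|(z² - 1) φ(z)| ≤ φ(0) = 1/√(2π)` and
`∫ s(h + σz) dz = 2/σ` (`tanh` is a primitive of `sech²`), the quantity is at most
`1/(2√(2π) σ)`, which is below `Λ₀/σ` because `π² ≥ 6`.
-/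

open Real Topology

lemma sech_pos (x : ℝ) : 0 < sech x := one_div_pos.2 (cosh_pos x)

lemma sech_le_one (x : ℝ) : sech x ≤ 1 := (div_le_one (cosh_pos x)).2 (one_le_cosh x)

lemma sech_sq_le_one (x : ℝ) : sech x ^ 2 ≤ 1 :=
  pow_le_one₀ (sech_pos x).le (sech_le_one x)

lemma tanh_sq_eq_one_sub_sech_sq (x : ℝ) : tanh x ^ 2 = 1 - sech x ^ 2 := by
  have := cosh_sq x
  rw [tanh_eq_sinh_div_cosh, sech]
  field_simp
  linarith

lemma sech_sq_le_inv_one_add_sq (x : ℝ) : sech x ^ 2 ≤ (1 + x ^ 2)⁻¹ := by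
  have hsinh : x ^ 2 ≤ sinh x ^ 2 := by
    rcases le_total 0 x with hx | hx
    · nlinarith [self_le_sinh_iff.2 hx]
    · nlinarith [sinh_le_self_iff.2 hx]
  rw [sech, div_pow, one_pow, cosh_sq, one_div]
  exact inv_anti₀ (by positivity) (by linarith)

@[fun_prop]
lemma continuous_sech : Continuous sech :=
  continuous_const.div continuous_cosh fun x => (cosh_pos x).ne'

lemma hasDerivAt_sech (x : ℝ) : HasDerivAt sech (-(sech x * tanh x)) x := by
  have h : HasDerivAt (fun y => 1 / cosh y) _ x :=
    (hasDerivAt_const x 1).div (hasDerivAt_cosh x) (cosh_pos x).ne'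
  refine h.congr_deriv ?_
  unfold sech
  rw [tanh_eq_sinh_div_cosh]
  field_simp
  ring

lemma hasDerivAt_tanh (x : ℝ) : HasDerivAt tanh (sech x ^ 2) x := by
  have h := (hasDerivAt_sinh x).div (hasDerivAt_cosh x) (cosh_pos x).ne'
  have hfun : tanh = fun y => sinh y / cosh y := funext tanh_eq_sinh_div_cosh
  rw [hfun]
  refine h.congr_deriv ?_
  have := cosh_sq x
  unfold sech
  field_simp
  linarith

lemma tanh_eq_one_sub_two_div (x : ℝ) : tanh x = 1 - 2 / (exp (2 * x) + 1) := by
  have hexp : exp (2 * x) = exp x * exp x := by rw [← exp_add, two_mul]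
  rw [tanh_eq_sinh_div_cosh, sinh_eq, cosh_eq, exp_neg, hexp]
  have := exp_pos x
  field_simp
  ring

lemma tendsto_tanh_atTop : Tendsto tanh atTop (𝓝 1) := by
  have h : Tendsto (fun x => exp (2 * x) + 1) atTop atTop :=
    tendsto_atTop_add_const_right _ _
      (tendsto_exp_atTop.comp (tendsto_id.const_mul_atTop two_pos))
  simpa [← tanh_eq_one_sub_two_div] using
    (h.const_div_atTop 2).const_sub 1

lemma tendsto_tanh_atBot : Tendsto tanh atBot (𝓝 (-1)) := by
  have h : Tendsto (fun x => exp (2 * x) + 1) atBot (𝓝 (0 + 1)) :=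
    (tendsto_exp_atBot.comp (tendsto_id.const_mul_atBot two_pos)).add_const 1
  have := (tendsto_const_nhds (x := (2 : ℝ))).div h (by norm_num) |>.const_sub 1
  norm_num at this
  simpa [← tanh_eq_one_sub_two_div] using this

lemma integrable_sech_sq : Integrable fun x => sech x ^ 2 :=
  integrable_inv_one_add_sq.mono' (by fun_prop) <| ae_of_all _ fun x => by
    rw [Real.norm_eq_abs, abs_of_nonneg (sq_nonneg _)]
    exact sech_sq_le_inv_one_add_sq x

lemma integral_sech_sq : ∫ x, sech x ^ 2 = 2 := by
  rw [integral_of_hasDerivAt_of_tendsto hasDerivAt_tanh integrable_sech_sq tendsto_tanh_atBot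
    tendsto_tanh_atTop]
  norm_num

lemma integral_sech_sq_comp_affine (h : ℝ) {σ : ℝ} (hσ : 0 < σ) :
    ∫ z, sech (h + σ * z) ^ 2 = 2 / σ := by
  rw [Measure.integral_comp_mul_left (fun y => sech (h + y) ^ 2),
    integral_add_left_eq_self (fun y => sech y ^ 2) h,
    integral_sech_sq, abs_of_pos (inv_pos.2 hσ), smul_eq_mul, inv_mul_eq_div]

lemma integrable_sech_sq_comp_affine (h : ℝ) {σ : ℝ} (hσ : σ ≠ 0) :
    Integrable fun z => sech (h + σ * z) ^ 2 :=
  (integrable_sech_sq.comp_add_left h).comp_mul_left' hσ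

lemma hasDerivAt_sech_sq (x : ℝ) :
    HasDerivAt (fun y => sech y ^ 2) (-2 * sech x ^ 2 * tanh x) x :=
  ((hasDerivAt_sech x).pow 2).congr_deriv (by ring)

lemma hasDerivAt_neg_two_mul_sech_sq_mul_tanh (x : ℝ) :
    HasDerivAt (fun y => -2 * sech y ^ 2 * tanh y) (4 * sech x ^ 2 - 6 * sech x ^ 4) x :=
  (((hasDerivAt_sech_sq x).const_mul (-2)).mul (hasDerivAt_tanh x)).congr_deriv <| by
    linear_combination 4 * sech x ^ 2 * tanh_sq_eq_one_sub_sech_sq x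

lemma abs_neg_two_mul_sech_sq_mul_tanh_le (x : ℝ) : |-2 * sech x ^ 2 * tanh x| ≤ 2 := by
  rw [abs_mul, abs_mul, abs_neg, abs_two, abs_of_nonneg (sq_nonneg _), mul_assoc]
  exact mul_le_of_le_one_right zero_le_two
    (mul_le_one₀ (sech_sq_le_one x) (abs_nonneg _) (abs_tanh_lt_one x).le)

lemma hasDerivAt_comp_const_add_mul {F F' : ℝ → ℝ} (hF : ∀ x, HasDerivAt F (F' x) x)
    (h σ z : ℝ) : HasDerivAt (fun z => F (h + σ * z)) (σ * F' (h + σ * z)) z := by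
  simpa [Function.comp_def, mul_comm] using
    (hF (h + σ * z)).comp z (((hasDerivAt_id z).const_mul σ).const_add h)

lemma stdGauss_nonneg (z : ℝ) : 0 ≤ stdGauss z := by
  unfold stdGauss; positivity

lemma hasDerivAt_stdGauss (z : ℝ) : HasDerivAt stdGauss (-z * stdGauss z) z := by
  have h : HasDerivAt (fun z : ℝ => -z ^ 2 / 2) (-z) z := by
    simpa using ((hasDerivAt_pow 2 z).neg.div_const 2).congr_deriv (by ring)
  refine (h.exp.div_const (√(2 * π))).congr_deriv ?_
  unfold stdGauss
  ring

lemma hasDerivAt_neg_mul_stdGauss (z : ℝ) :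
    HasDerivAt (fun z => -z * stdGauss z) ((z ^ 2 - 1) * stdGauss z) z :=
  ((hasDerivAt_id z).neg.mul (hasDerivAt_stdGauss z)).congr_deriv (by simp; ring)

lemma integrable_pow_mul_stdGauss (n : ℕ) : Integrable fun z => z ^ n * stdGauss z := by
  have h := (integrable_rpow_mul_exp_neg_mul_sq (b := 1 / 2) (by norm_num)
    (s := n) (by linarith [n.cast_nonneg (α := ℝ)])).div_const (√(2 * π))
  refine h.congr (ae_of_all _ fun z => ?_)
  simp only [rpow_natCast, stdGauss]
  ring_nf

lemma integrable_stdGauss : Integrable stdGauss := by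
  simpa using integrable_pow_mul_stdGauss 0

lemma abs_sq_sub_one_mul_stdGauss_le (z : ℝ) :
    |(z ^ 2 - 1) * stdGauss z| ≤ (√(2 * π))⁻¹ := by
  have hexp : |z ^ 2 - 1| ≤ exp (z ^ 2 / 2) := by
    rw [abs_le]
    constructor
    · nlinarith [add_one_le_exp (z ^ 2 / 2)]
    · have h4 := add_one_le_exp (z ^ 2 / 4)
      have hsq : exp (z ^ 2 / 2) = exp (z ^ 2 / 4) ^ 2 := by rw [← exp_nat_mul]; ring_nf
      nlinarith [sq_nonneg (z ^ 2 / 4 - 1)]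
  have hinv : exp (z ^ 2 / 2) * exp (-z ^ 2 / 2) = 1 := by
    rw [← exp_add]; ring_nf; exact exp_zero
  rw [abs_mul, abs_of_nonneg (stdGauss_nonneg z), stdGauss, ← one_div, mul_div_assoc']
  gcongr
  calc |z ^ 2 - 1| * exp (-z ^ 2 / 2) ≤ exp (z ^ 2 / 2) * exp (-z ^ 2 / 2) := by gcongr
    _ = 1 := hinv

lemma MeasureTheory.Integrable.continuous_mul_of_abs_le {f ψ : ℝ → ℝ} {C : ℝ}
    (hψ : Integrable ψ) (hf : Continuous f) (hC : ∀ x, |f x| ≤ C) :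
    Integrable fun x => f x * ψ x :=
  hψ.bdd_mul hf.aestronglyMeasurable (ae_of_all _ hC)

theorem integral_deriv_deriv_mul_stdGauss {g g' g'' : ℝ → ℝ} {C C' : ℝ}
    (hg : ∀ x, HasDerivAt g (g' x) x) (hg' : ∀ x, HasDerivAt g' (g'' x) x)
    (hg_le : ∀ x, |g x| ≤ C) (hg'_le : ∀ x, |g' x| ≤ C')
    (hg'' : Integrable fun z => g'' z * stdGauss z) :
    ∫ z, g'' z * stdGauss z = ∫ z, g z * ((z ^ 2 - 1) * stdGauss z) := by
  have hgc : Continuous g := continuous_iff_continuousAt.2 fun x => (hg x).continuousAt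
  have hg'c : Continuous g' := continuous_iff_continuousAt.2 fun x => (hg' x).continuousAt
  have hφ := integrable_stdGauss
  have hφ' : Integrable fun z => -z * stdGauss z := by
    simpa [neg_mul] using (integrable_pow_mul_stdGauss 1).neg
  have hφ'' : Integrable fun z => (z ^ 2 - 1) * stdGauss z := by
    refine ((integrable_pow_mul_stdGauss 2).sub hφ).congr (ae_of_all _ fun z => ?_)
    simp only [Pi.sub_apply]
    ring
  have first : ∫ z, g' z * (-z * stdGauss z) = -∫ z, g'' z * stdGauss z :=
    integral_mul_deriv_eq_deriv_mul_of_integrable (fun x _ => hg' x)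
      (fun x _ => hasDerivAt_stdGauss x) (hφ'.continuous_mul_of_abs_le hg'c hg'_le) hg''
      (hφ.continuous_mul_of_abs_le hg'c hg'_le)
  have second : ∫ z, g z * ((z ^ 2 - 1) * stdGauss z) = -∫ z, g' z * (-z * stdGauss z) :=
    integral_mul_deriv_eq_deriv_mul_of_integrable (fun x _ => hg x)
      (fun x _ => hasDerivAt_neg_mul_stdGauss x) (hφ''.continuous_mul_of_abs_le hgc hg_le)
      (hφ'.continuous_mul_of_abs_le hg'c hg'_le) (hφ'.continuous_mul_of_abs_le hgc hg_le)
  rw [second, first, neg_neg]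

lemma sq_mul_gexp_sech_sq_sub_eq_integral (h σ : ℝ) :
    σ ^ 2 * gexp (fun x => sech x ^ 2) σ h - 3 / 2 * (σ ^ 2 * gexp (fun x => sech x ^ 4) σ h)
      = (∫ z, sech (h + σ * z) ^ 2 * ((z ^ 2 - 1) * stdGauss z)) / 4 := by
  have hφ := integrable_stdGauss
  have hs2 : Integrable fun z => sech (h + σ * z) ^ 2 * stdGauss z :=
    hφ.continuous_mul_of_abs_le (by fun_prop) fun z => by
      rw [abs_of_nonneg (sq_nonneg _)]
      exact sech_sq_le_one _
  have hs4 : Integrable fun z => sech (h + σ * z) ^ 4 * stdGauss z :=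
    hφ.continuous_mul_of_abs_le (by fun_prop) fun z => by
      rw [abs_of_nonneg (by positivity)]
      exact pow_le_one₀ (sech_pos _).le (sech_le_one _)
  have hsplit :
      ∫ z, σ * (σ * (4 * sech (h + σ * z) ^ 2 - 6 * sech (h + σ * z) ^ 4)) * stdGauss z
        = 4 * σ ^ 2 * gexp (fun x => sech x ^ 2) σ h
          - 6 * σ ^ 2 * gexp (fun x => sech x ^ 4) σ h := by
    unfold gexp
    rw [← integral_const_mul, ← integral_const_mul,
      ← integral_sub (hs2.const_mul _) (hs4.const_mul _)]
    congr 1 with z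
    ring
  have hg'' : Integrable fun z =>
      σ * (σ * (4 * sech (h + σ * z) ^ 2 - 6 * sech (h + σ * z) ^ 4)) * stdGauss z := by
    refine ((hs2.const_mul (4 * σ ^ 2)).sub (hs4.const_mul (6 * σ ^ 2))).congr
      (ae_of_all _ fun z => ?_)
    simp only [Pi.sub_apply]
    ring
  have hg := hasDerivAt_comp_const_add_mul hasDerivAt_sech_sq h σ
  have hg' z :=
    (hasDerivAt_comp_const_add_mul hasDerivAt_neg_two_mul_sech_sq_mul_tanh h σ z).const_mul σ
  rw [← integral_deriv_deriv_mul_stdGauss hg hg'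
    (fun z => by rw [abs_of_nonneg (sq_nonneg _)]; exact sech_sq_le_one _)
    (fun z => by
      rw [abs_mul]
      exact mul_le_mul_of_nonneg_left (abs_neg_two_mul_sech_sq_mul_tanh_le _) (abs_nonneg σ))
    hg'', hsplit]
  ring

lemma abs_integral_sech_sq_mul_le (h : ℝ) {σ : ℝ} (hσ : 0 < σ) :
    |∫ z, sech (h + σ * z) ^ 2 * ((z ^ 2 - 1) * stdGauss z)| ≤ 2 / σ * (√(2 * π))⁻¹ :=
  calc _ ≤ ∫ z, |sech (h + σ * z) ^ 2 * ((z ^ 2 - 1) * stdGauss z)| :=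
        abs_integral_le_integral_abs
    _ ≤ ∫ z, sech (h + σ * z) ^ 2 * (√(2 * π))⁻¹ :=
        integral_mono_of_nonneg (ae_of_all _ fun _ => abs_nonneg _)
          ((integrable_sech_sq_comp_affine h hσ.ne').mul_const _) <| ae_of_all _ fun z => by
            dsimp only
            rw [abs_mul, abs_of_nonneg (sq_nonneg _)]
            exact mul_le_mul_of_nonneg_left (abs_sq_sub_one_mul_stdGauss_le z) (sq_nonneg _)
    _ = 2 / σ * (√(2 * π))⁻¹ := by
        rw [integral_mul_const, integral_sech_sq_comp_affine h hσ]

theorem stmt_4 (σ : ℝ) (hσ : 0 < σ) (h : ℝ) :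
    |σ ^ 2 * gexp (fun x => sech x ^ 2) σ h - 3 / 2 * (σ ^ 2 * gexp (fun x => sech x ^ 4) σ h)|
      ≤ (Real.pi ^ 2 - 3) / (6 * Real.sqrt (2 * Real.pi)) / σ := by
  have hπ : 6 ≤ π ^ 2 := by nlinarith [pi_gt_three]
  rw [sq_mul_gexp_sech_sq_sub_eq_integral, abs_div, abs_of_pos (by norm_num : (0 : ℝ) < 4)]
  calc _ ≤ 2 / σ * (√(2 * π))⁻¹ / 4 := by gcongr; exact abs_integral_sech_sq_mul_le h hσ
    _ = 3 / (6 * √(2 * π)) / σ := by field_simp; ring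
    _ ≤ (π ^ 2 - 3) / (6 * √(2 * π)) / σ := by gcongr; linarith
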